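/- If H₄ is a parity check matrix of a classical [n,k,d] code over F₄ (so ⟨H₄, a⟩ ≠ 0 for every nonzero a ∈ F₄ⁿ with wt₄(a) < d), then the binary matrix H = γ(H̃₄), with H̃₄ obtained by stacking ωH₄ over ω̄H₄, satisfies H ⊙ uᵀ ≠ 0 for every nonzero u ∈ (ℤ/2)^{2n} with symplectic weight wt(u) < d. -/

import Mathlib

open scoped Classical
open Finset

/-- The trace F₄ → F₂, Tr(x) = x + x², with values read in ℤ/2. -/
noncomputable def tr2 (x : GaloisField 2 2) : ZMod 2 := if x + x ^ 2 = 0 then 0 else 1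

/-- γ : F₄ → (ℤ/2)², γ(a) = (Tr(ωa), Tr(ω̄a)): 0 ↦ 00, ω̄ ↦ 01, 1 ↦ 11, ω ↦ 10. -/
noncomputable def gammaMap (ω : GaloisField 2 2) (a : GaloisField 2 2) : ZMod 2 × ZMod 2 :=
  (tr2 (ω * a), tr2 ((ω + 1) * a))

/-- Symplectic product of the binary image of the row `c • (H₄ r)` (c = ω or ω̄)
with u = (z|x) ∈ (ℤ/2)^{2n}: Σ_i z_i(row) x_i(u) + z_i(u) x_i(row). -/
noncomputable def rowSymp (ω : GaloisField 2 2) {m n : ℕ}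
    (H₄ : Matrix (Fin m) (Fin n) (GaloisField 2 2)) (c : GaloisField 2 2) (r : Fin m)
    (u : (Fin n → ZMod 2) × (Fin n → ZMod 2)) : ZMod 2 :=
  (∑ i, (gammaMap ω (c * H₄ r i)).1 * u.2 i) + (∑ i, u.1 i * (gammaMap ω (c * H₄ r i)).2)


/-!
Write `ω̄ = ω + 1`. The map `γ` is bijective, with inverse `(z, x) ↦ zω + xω̄`, and
it turns Hermitian products into symplectic ones: `γ(b) ⊙ γ(a) = Tr(b² a)`. Hence the symplectic
products of `u = γ(a)` with the binary images of the rows `ωh` and `ω̄h` of `H` are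
`Tr(ω̄ ⟨h, a⟩)` and `Tr(ω ⟨h, a⟩)`, the two coordinates of `γ(⟨h, a⟩)`. Since `γ` preserves
weight, the check property of `H₄` for `a` yields a row with `⟨h, a⟩ ≠ 0`, i.e. `γ(⟨h, a⟩) ≠ 0`.
-/

local notation "F₄" => GaloisField 2 2
local notation "ι" => ZMod.castHom (dvd_refl 2) F₄

lemma GaloisField.pow_four_eq_self (x : F₄) : x ^ 4 = x := by
  have : Fintype F₄ := Fintype.ofFinite _
  have hcard : Fintype.card F₄ = 4 := by
    rw [Fintype.card_eq_nat_card, GaloisField.card 2 2 two_ne_zero]; rfl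
  simpa [hcard] using FiniteField.pow_card x

lemma castHom_sq (z : ZMod 2) : ι z ^ 2 = ι z := by
  rw [← map_pow, ZMod.pow_card]

/-- Through the embedding `ZMod 2 → F₄`, every identity about `tr2` becomes a polynomial
identity in `F₄`. -/
lemma castHom_tr2 (x : F₄) : ι (tr2 x) = x + x ^ 2 := by
  have hidem : IsIdempotentElem (x + x ^ 2) := by
    unfold IsIdempotentElem
    linear_combination GaloisField.pow_four_eq_self x + x ^ 3 * CharTwo.two_eq_zero (R := F₄)
  unfold tr2
  split_ifs with h
  · rw [map_zero, h]
  · rw [map_one, (IsIdempotentElem.iff_eq_zero_or_one.mp hidem).resolve_left h]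

lemma tr2_add (x y : F₄) : tr2 (x + y) = tr2 x + tr2 y :=
  (ι).injective <| by
    simp only [map_add, castHom_tr2]
    linear_combination x * y * CharTwo.two_eq_zero (R := F₄)

lemma tr2_sum {α : Type*} (s : Finset α) (f : α → F₄) :
    tr2 (∑ i ∈ s, f i) = ∑ i ∈ s, tr2 (f i) :=
  map_sum (AddMonoidHom.mk' tr2 tr2_add) f s

noncomputable def gammaInv (ω : F₄) (z x : ZMod 2) : F₄ := ι z * ω + ι x * (ω + 1)

section

variable {ω : F₄} (hω : ω ^ 2 = ω + 1)
include hω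

lemma omega_add_one_sq : (ω + 1) ^ 2 = ω := by
  linear_combination hω + (ω + 1) * CharTwo.two_eq_zero (R := F₄)

lemma gammaMap_symplectic (a b : F₄) :
    (gammaMap ω b).1 * (gammaMap ω a).2 + (gammaMap ω a).1 * (gammaMap ω b).2 =
      tr2 (b ^ 2 * a) :=
  (ι).injective <| by
    have hb := GaloisField.pow_four_eq_self b
    simp only [gammaMap, map_add, map_mul, castHom_tr2]
    grind

lemma eq_zero_of_gammaMap_eq_zero {S : F₄} (h : gammaMap ω S = 0) : S = 0 := by
  have h₁ := congrArg (ι ·) (congrArg Prod.fst h)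
  have h₂ := congrArg (ι ·) (congrArg Prod.snd h)
  simp only [gammaMap, castHom_tr2, Prod.fst_zero, Prod.snd_zero, map_zero] at h₁ h₂
  have hS : S ^ 2 = 0 := by grind
  exact pow_eq_zero_iff two_ne_zero |>.mp hS

lemma gammaMap_gammaInv (z x : ZMod 2) : gammaMap ω (gammaInv ω z x) = (z, x) := by
  have hz := castHom_sq z
  have hx := castHom_sq x
  ext <;> apply (ι).injective <;> simp only [gammaMap, gammaInv, castHom_tr2] <;> grind

lemma gammaInv_eq_zero_iff (z x : ZMod 2) : gammaInv ω z x = 0 ↔ (z, x) = (0, 0) := by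
  constructor
  · intro h
    rw [← gammaMap_gammaInv hω z x, h]
    simp [gammaMap, tr2]
  · simp only [Prod.mk.injEq, and_imp]
    rintro rfl rfl
    simp [gammaInv]

lemma rowSymp_eq_tr2 {m n : ℕ} (H₄ : Matrix (Fin m) (Fin n) F₄) (c : F₄) (r : Fin m)
    (u : (Fin n → ZMod 2) × (Fin n → ZMod 2)) :
    rowSymp ω H₄ c r u = tr2 (c ^ 2 * ∑ i, H₄ r i ^ 2 * gammaInv ω (u.1 i) (u.2 i)) := by
  rw [rowSymp, ← sum_add_distrib, mul_sum, tr2_sum]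
  refine sum_congr rfl fun i _ => ?_
  have h := gammaMap_symplectic hω (gammaInv ω (u.1 i) (u.2 i)) (c * H₄ r i)
  rw [gammaMap_gammaInv hω] at h
  rw [h]
  ring_nf

lemma gammaMap_hermitian_eq_rowSymp {m n : ℕ} (H₄ : Matrix (Fin m) (Fin n) F₄) (r : Fin m)
    (u : (Fin n → ZMod 2) × (Fin n → ZMod 2)) :
    gammaMap ω (∑ i, H₄ r i ^ 2 * gammaInv ω (u.1 i) (u.2 i)) =
      (rowSymp ω H₄ (ω + 1) r u, rowSymp ω H₄ ω r u) := by
  rw [rowSymp_eq_tr2 hω, rowSymp_eq_tr2 hω, omega_add_one_sq hω, hω, gammaMap]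

end

/-- If H₄ is a parity check matrix detecting (via the Hermitian inner product
⟨x,y⟩ = Σ x_i² y_i) every nonzero a ∈ F₄ⁿ of weight < d, then the binary matrix
H = γ(H̃₄), with H̃₄ the stack of ωH₄ over ω̄H₄, satisfies H ⊙ uᵀ ≠ 0 for
every nonzero u ∈ (ℤ/2)^{2n} of symplectic weight < d. -/
theorem quaternary_to_symplectic_check (ω : GaloisField 2 2) (hω : ω ^ 2 = ω + 1)
    (m n d : ℕ) (H₄ : Matrix (Fin m) (Fin n) (GaloisField 2 2))
    (hcheck : ∀ a : Fin n → GaloisField 2 2, a ≠ 0 →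
      (univ.filter fun i => a i ≠ 0).card < d →
      ∃ r : Fin m, (∑ i, (H₄ r i) ^ 2 * a i) ≠ 0) :
    ∀ u : (Fin n → ZMod 2) × (Fin n → ZMod 2), u ≠ 0 →
      (univ.filter fun i => (u.1 i, u.2 i) ≠ ((0 : ZMod 2), (0 : ZMod 2))).card < d →
      ∃ r : Fin m, rowSymp ω H₄ ω r u ≠ 0 ∨ rowSymp ω H₄ (ω + 1) r u ≠ 0 := by
  intro u hu hwt
  set a : Fin n → F₄ := fun i => gammaInv ω (u.1 i) (u.2 i)
  have hsupp : (univ.filter fun i => a i ≠ 0) =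
      univ.filter fun i => (u.1 i, u.2 i) ≠ ((0 : ZMod 2), (0 : ZMod 2)) := by
    simp only [a, ne_eq, gammaInv_eq_zero_iff hω]
  have ha : a ≠ 0 := by
    contrapose! hu
    ext i <;> simp_all [a, funext_iff, gammaInv_eq_zero_iff hω]
  obtain ⟨r, hr⟩ := hcheck a ha (hsupp ▸ hwt)
  refine ⟨r, ?_⟩
  by_contra! h
  apply hr (eq_zero_of_gammaMap_eq_zero hω _)
  rw [gammaMap_hermitian_eq_rowSymp hω, h.1, h.2, Prod.mk_zero_zero]
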